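/- The integer sine is invariant under integer-affine transformations: if P, Q, R ∈ Z² are non-collinear and T(x) = Mx + b with M ∈ GL_2(Z) and b ∈ Z², then Isin(T(P)T(Q)T(R)) = Isin(PQR). -/
import Mathlib


/-- The set of integer points lying strictly between `P` and `Q` on the segment `PQ`. -/
def interiorIntPoints (P Q : Fin 2 → ℤ) : Set (Fin 2 → ℤ) :=
  {x | ∃ t : ℝ, 0 < t ∧ t < 1 ∧
    (fun i => (x i : ℝ)) = (1 - t) • (fun i => (P i : ℝ)) + t • (fun i => (Q i : ℝ))}

/-- The integer length of the segment `PQ`. -/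
noncomputable def intLength (P Q : Fin 2 → ℤ) : ℕ := (interiorIntPoints P Q).ncard + 1

/-- The integer sine `Isin(PQR) = 2 S_{PQR} / (Il(QP) · Il(QR))`. -/
noncomputable def intSin (P Q R : Fin 2 → ℤ) : ℕ :=
  (Matrix.det !![P 0 - Q 0, R 0 - Q 0; P 1 - Q 1, R 1 - Q 1]).natAbs /
    (intLength Q P * intLength Q R)

/-- The affine map `x ↦ A x + b`. -/
def affT (A : Matrix (Fin 2) (Fin 2) ℤ) (b : Fin 2 → ℤ) (x : Fin 2 → ℤ) : Fin 2 → ℤ :=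
  A.mulVec x + b

lemma affT_mem_interior (A : Matrix (Fin 2) (Fin 2) ℤ) (b P Q x : Fin 2 → ℤ)
    (h : x ∈ interiorIntPoints P Q) :
    affT A b x ∈ interiorIntPoints (affT A b P) (affT A b Q) := by
  obtain ⟨t, ht0, ht1, hx⟩ := h
  refine ⟨t, ht0, ht1, ?_⟩
  have h0 := congrFun hx 0
  have h1 := congrFun hx 1
  simp only [Pi.add_apply, Pi.smul_apply, smul_eq_mul] at h0 h1
  funext i
  fin_cases i <;>
    simp only [affT, Pi.add_apply, Pi.smul_apply, smul_eq_mul, Matrix.mulVec,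
      dotProduct, Fin.sum_univ_two] <;>
    push_cast <;>
  · first
    | linear_combination (A 0 0 : ℝ) * h0 + (A 0 1 : ℝ) * h1
    | linear_combination (A 1 0 : ℝ) * h0 + (A 1 1 : ℝ) * h1

lemma affT_cancel (M : GL (Fin 2) ℤ) (b : Fin 2 → ℤ) (x : Fin 2 → ℤ) :
    affT (↑M⁻¹) (-(↑M⁻¹ : Matrix (Fin 2) (Fin 2) ℤ).mulVec b)
      (affT (↑M) b x) = x := by
  simp only [affT, Matrix.mulVec_add, Matrix.mulVec_mulVec]
  have : ((↑M⁻¹ : Matrix (Fin 2) (Fin 2) ℤ) * (↑M : Matrix (Fin 2) (Fin 2) ℤ)) = 1 := M.inv_mul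
  rw [this, Matrix.one_mulVec]
  abel

lemma interior_image (M : GL (Fin 2) ℤ) (b P Q : Fin 2 → ℤ) :
    interiorIntPoints (affT (↑M) b P) (affT (↑M) b Q)
      = affT (↑M) b '' interiorIntPoints P Q := by
  ext x
  constructor
  · intro hx
    refine ⟨affT (↑M⁻¹) (-(↑M⁻¹ : Matrix (Fin 2) (Fin 2) ℤ).mulVec b) x, ?_, ?_⟩
    · have := affT_mem_interior (↑M⁻¹) (-(↑M⁻¹ : Matrix (Fin 2) (Fin 2) ℤ).mulVec b)
        _ _ x hx
      rwa [affT_cancel, affT_cancel] at this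
    · -- affT M b (affT M⁻¹ b' x) = x
      have := affT_cancel M⁻¹ (-(↑M⁻¹ : Matrix (Fin 2) (Fin 2) ℤ).mulVec b)
        (affT (↑M⁻¹) (-(↑M⁻¹ : Matrix (Fin 2) (Fin 2) ℤ).mulVec b) x)
      -- not directly; compute manually
      simp only [affT, Matrix.mulVec_add, Matrix.mulVec_mulVec, Matrix.mulVec_neg]
      have hMM : ((↑M : Matrix (Fin 2) (Fin 2) ℤ) * (↑M⁻¹ : Matrix (Fin 2) (Fin 2) ℤ)) = 1 := M.mul_inv
      rw [hMM, Matrix.one_mulVec, Matrix.one_mulVec]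
      abel
  · rintro ⟨y, hy, rfl⟩
    exact affT_mem_interior _ _ _ _ _ hy

lemma affT_injective (M : GL (Fin 2) ℤ) (b : Fin 2 → ℤ) :
    Function.Injective (affT (↑M) b) := by
  intro x y h
  have := congrArg (affT (↑M⁻¹) (-(↑M⁻¹ : Matrix (Fin 2) (Fin 2) ℤ).mulVec b)) h
  rwa [affT_cancel, affT_cancel] at this

lemma intLength_affT (M : GL (Fin 2) ℤ) (b P Q : Fin 2 → ℤ) :
    intLength (affT (↑M) b P) (affT (↑M) b Q) = intLength P Q := by
  unfold intLength
  rw [interior_image, Set.ncard_image_of_injective _ (affT_injective M b)]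

theorem intSin_affine_invariant (P Q R : Fin 2 → ℤ)
    (hncol : Matrix.det !![P 0 - Q 0, R 0 - Q 0; P 1 - Q 1, R 1 - Q 1] ≠ 0)
    (M : GL (Fin 2) ℤ) (b : Fin 2 → ℤ) :
    intSin ((M : Matrix (Fin 2) (Fin 2) ℤ).mulVec P + b)
        ((M : Matrix (Fin 2) (Fin 2) ℤ).mulVec Q + b)
        ((M : Matrix (Fin 2) (Fin 2) ℤ).mulVec R + b)
      = intSin P Q R := by
  have key : (!![affT (↑M) b P 0 - affT (↑M) b Q 0, affT (↑M) b R 0 - affT (↑M) b Q 0;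
      affT (↑M) b P 1 - affT (↑M) b Q 1, affT (↑M) b R 1 - affT (↑M) b Q 1]
      : Matrix (Fin 2) (Fin 2) ℤ)
      = (↑M : Matrix (Fin 2) (Fin 2) ℤ) *
        !![P 0 - Q 0, R 0 - Q 0; P 1 - Q 1, R 1 - Q 1] := by
    ext i j
    fin_cases i <;> fin_cases j <;>
      simp [affT, Matrix.mul_apply, Matrix.mulVec, dotProduct,
        Fin.sum_univ_two] <;> ring
  have hdetM : ((↑M : Matrix (Fin 2) (Fin 2) ℤ).det).natAbs = 1 := by
    have : IsUnit (↑M : Matrix (Fin 2) (Fin 2) ℤ).det :=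
      (Matrix.isUnit_iff_isUnit_det _).mp M.isUnit
    rcases Int.isUnit_iff.mp this with h | h <;> rw [h] <;> rfl
  show intSin (affT (↑M) b P) (affT (↑M) b Q) (affT (↑M) b R) = intSin P Q R
  unfold intSin
  rw [key, Matrix.det_mul, Int.natAbs_mul, hdetM, one_mul,
    intLength_affT, intLength_affT]
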